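/- Let C be a symmetric monoidal category, CCom its category of cocommutative comonoids (which is cartesian, with the forgetful functor U : CCom → C strict monoidal). Then monoidal lenses mLens((A,B),(S,T)) := CCom(S,A) × C(U S ⊗ B, T) are mixed optics: there is an isomorphism ∫^{C∈CCom} CCom(S, C×A) × C(U C ⊗ B, T) ≅ CCom(S,A) × C(U S ⊗ B, T), exhibiting mLens as the optic for the actions of the cartesian product on CCom and of C ⊘ B := U C ⊗ B on C. -/

import Mathlib

/-!
Since `S ⟶ m ⨯ A` is `(S ⟶ m) × (S ⟶ A)`, the coend collapses by co-Yoneda: dinaturality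
along `l ≫ fst : S ⟶ m` identifies every optic `⟨m, l, r⟩` with
`⟨S, lift (𝟙 S) (l ≫ snd), R(l ≫ fst)_B ≫ r⟩`, which is determined by its two components.
-/

open CategoryTheory MonoidalCategory Limits

universe v₁ v₂ v₃ u₁ u₂ u₃

section Optic

variable {M : Type u₁} [Category.{v₁} M] {C : Type u₂} [Category.{v₂} C]
  {D : Type u₃} [Category.{v₃} D]

/-- A representative `(m, l, r)` of the coend
`∫^{m ∈ M} C(S, m ⊘ A) ⊗ D(m ⊛ B, T)` defining a mixed optic, for the
actions `L = (⊘) : M ⥤ [C,C]` and `R = (⊛) : M ⥤ [D,D]`. -/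
structure OpticRep (L : M ⥤ C ⥤ C) (R : M ⥤ D ⥤ D) (A S : C) (B T : D) where
  res : M
  view : S ⟶ (L.obj res).obj A
  update : (R.obj res).obj B ⟶ T

/-- The dinaturality relation identifying representatives of the coend. -/
inductive OpticRel (L : M ⥤ C ⥤ C) (R : M ⥤ D ⥤ D) (A S : C) (B T : D) :
    OpticRep L R A S B T → OpticRep L R A S B T → Prop
  | rel {m m' : M} (f : m ⟶ m') (l : S ⟶ (L.obj m).obj A) (r : (R.obj m').obj B ⟶ T) :
      OpticRel L R A S B T
        ⟨m, l, (R.map f).app B ≫ r⟩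
        ⟨m', l ≫ (L.map f).app A, r⟩

/-- The set (coend) `∫^{m ∈ M} C(S, m ⊘ A) × D(m ⊛ B, T)` of mixed optics from `(S,T)`
with focus `(A,B)`. -/
def Optic (L : M ⥤ C ⥤ C) (R : M ⥤ D ⥤ D) (A S : C) (B T : D) :=
  Quot (OpticRel L R A S B T)

end Optic

variable (C : Type u₂) [Category.{v₂} C] [MonoidalCategory C] [SymmetricCategory C]

/-- The category of cocommutative comonoids in a symmetric monoidal category `C`:
the full subcategory of the category `Comon_ C` of comonoids consisting of those comonoids
whose comultiplication is cocommutative. -/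
def CCom : Type max u₂ v₂ :=
  ObjectProperty.FullSubcategory fun X : Comon C =>
    ComonObj.comul (X := X.X) ≫ (β_ X.X X.X).hom = ComonObj.comul (X := X.X)

instance : Category (CCom C) := ObjectProperty.FullSubcategory.category _

/-- The forgetful functor `U : CCom → C` from cocommutative comonoids to `C`. -/
def CComForget : CCom C ⥤ C :=
  ObjectProperty.ι _ ⋙ Comon.forget C

noncomputable section

namespace Optic

variable {M : Type u₁} [Category.{v₁} M] [HasBinaryProducts M] {D : Type u₃} [Category.{v₃} D]
  (R : M ⥤ D ⥤ D) {A S : M} {B T : D}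

-- Typed with `m ⨯ A` rather than `(prod.functor.obj m).obj A`: against the latter the `prod`
-- simp lemmas do not fire.
def lensOfRep {m : M} (l : S ⟶ m ⨯ A) (r : (R.obj m).obj B ⟶ T) :
    (S ⟶ A) × ((R.obj S).obj B ⟶ T) :=
  (l ≫ prod.snd, (R.map (l ≫ prod.fst)).app B ≫ r)

theorem lensOfRep_comp_prodMap {m m' : M} (f : m ⟶ m') (l : S ⟶ m ⨯ A)
    (r : (R.obj m').obj B ⟶ T) :
    lensOfRep R (l ≫ prod.map f (𝟙 A)) r = lensOfRep R l ((R.map f).app B ≫ r) := by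
  simp [lensOfRep]

def toLens : Optic prod.functor R A S B T → (S ⟶ A) × ((R.obj S).obj B ⟶ T) :=
  Quot.lift (fun p => lensOfRep R p.view p.update) fun _ _ ⟨f, l, r⟩ =>
    (lensOfRep_comp_prodMap R f l r).symm

def ofLens (q : (S ⟶ A) × ((R.obj S).obj B ⟶ T)) : Optic prod.functor R A S B T :=
  Quot.mk _ ⟨S, prod.lift (𝟙 S) q.1, q.2⟩

theorem ofLens_lensOfRep {m : M} (l : S ⟶ m ⨯ A) (r : (R.obj m).obj B ⟶ T) :
    ofLens R (lensOfRep R l r) = Quot.mk _ ⟨m, l, r⟩ := by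
  have h : prod.lift (𝟙 S) (l ≫ prod.snd) ≫ prod.map (l ≫ prod.fst) (𝟙 A) = l := by
    ext <;> simp [prod.lift_fst, prod.lift_snd]
  conv_rhs => rw [← h]
  exact Quot.sound (OpticRel.rel (l ≫ prod.fst) _ r)

theorem ofLens_toLens (o : Optic prod.functor R A S B T) : ofLens R (toLens R o) = o := by
  induction o using Quot.ind with
  | mk p => exact ofLens_lensOfRep R p.view p.update

theorem toLens_ofLens (q : (S ⟶ A) × ((R.obj S).obj B ⟶ T)) : toLens R (ofLens R q) = q := by
  simp [toLens, ofLens, lensOfRep, prod.lift_fst, prod.lift_snd]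

def equivLens : Optic prod.functor R A S B T ≃ (S ⟶ A) × ((R.obj S).obj B ⟶ T) where
  toFun := toLens R
  invFun := ofLens R
  left_inv := ofLens_toLens R
  right_inv := toLens_ofLens R

end Optic

end

theorem monoidal_lenses_are_mixed_optics
    [HasBinaryProducts (CCom C)]
    (S A : CCom C) (B T : C) :
    Nonempty (Optic (prod.functor : CCom C ⥤ CCom C ⥤ CCom C)
        (CComForget C ⋙ curriedTensor C) A S B T ≃
      ((S ⟶ A) × ((CComForget C).obj S ⊗ B ⟶ T))) :=
  ⟨Optic.equivLens _⟩
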